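/- For every integer p ≥ 2, the function ξ_p(β) := m_*(β,p) is continuous and strictly increasing on the open interval (β*(p), ∞), and lim_{β→∞} ξ_p(β) = 1. -/

import Mathlib

open Real Set Filter

/-- `I(x) = ½[(1+x)log(1+x) + (1−x)log(1−x)]` (with `Real.log 0 = 0`). -/
noncomputable def bahI (x : ℝ) : ℝ :=
  ((1 + x) * Real.log (1 + x) + (1 - x) * Real.log (1 - x)) / 2

/-- `H_{β,p}(x) = β xᵖ − I(x)`. -/
noncomputable def bahH (β : ℝ) (p : ℕ) (x : ℝ) : ℝ := β * x ^ p - bahI x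

/-- `β*(p) = sup {β ≥ 0 : sup_{x∈[−1,1]} H_{β,p}(x) = 0}`. -/
noncomputable def betaStar (p : ℕ) : ℝ :=
  sSup {β : ℝ | 0 ≤ β ∧ sSup (bahH β p '' Set.Icc (-1 : ℝ) 1) = 0}

open Topology

/-!
Comparing `H_{β₁,p}` and `H_{β₂,p}` at each other's maximizers gives
`(β₂ - β₁)(m₂ᵖ - m₁ᵖ) ≥ 0`, and the critical-point equation `β p mᵖ⁻¹ = artanh m` rules out
equality, so `ξ` is strictly increasing. Writing `H' = x^q (β p - artanh x / x^q)` with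
`q = p - 1`, the ratio `artanh x / x^q` has no interior local maximum on `(0, 1)`; hence between
two positive maximizers `H` would be strictly increasing, so the positive maximizer is unique
and continuity follows from Berge's maximum theorem. Finally `β (xᵖ - ξ(β)ᵖ) ≤ log 2` for every
`x ∈ [0, 1]`, which forces `ξ(β) → 1`.
-/

theorem continuousAt_of_unique_isMaxOn {X Y β : Type*} [TopologicalSpace X]
    [TopologicalSpace Y] [LinearOrder β] [TopologicalSpace β] [OrderClosedTopology β]
    {F : X → Y → β} (hF : Continuous (Function.uncurry F)) {K : Set Y} (hK : IsCompact K)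
    {g : X → Y} {x₀ : X} (hg : ∀ᶠ x in 𝓝 x₀, g x ∈ K ∧ IsMaxOn (F x) K (g x))
    (huniq : ∀ y ∈ K, IsMaxOn (F x₀) K y → y = g x₀) : ContinuousAt g x₀ := by
  refine hK.tendsto_nhds_of_unique_mapClusterPt (hg.mono fun _ h => h.1) fun y hyK hy => ?_
  refine huniq y hyK fun z hz => ?_
  let G := comap g (𝓝 y) ⊓ 𝓝 x₀
  have : G.NeBot := neBot_inf_comap_iff_map'.2 hy.clusterPt.neBot
  have hgraph : Tendsto (fun x => (x, g x)) G (𝓝 (x₀, y)) :=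
    (tendsto_inf_right tendsto_id).prodMk_nhds (tendsto_inf_left tendsto_comap)
  exact (isClosed_le (hF.comp (continuous_fst.prodMk continuous_const)) hF).mem_of_tendsto
    hgraph ((hg.filter_mono inf_le_right).mono fun x hx => hx.2 hz)

theorem Real.artanh_eq_half_log_sub {x : ℝ} (hx : x ∈ Ioo (-1) 1) :
    artanh x = (log (1 + x) - log (1 - x)) / 2 := by
  rw [artanh_eq_half_log (Ioo_subset_Icc_self hx),
    log_div (by linarith [hx.1]) (by linarith [hx.2])]
  ring

theorem Real.hasDerivAt_artanh {x : ℝ} (hx : x ∈ Ioo (-1) 1) :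
    HasDerivAt artanh (1 - x ^ 2)⁻¹ x := by
  obtain ⟨h₁, h₂⟩ := hx
  have hlog₁ := ((hasDerivAt_id x).const_add 1).log (by simp; linarith)
  have hlog₂ := ((hasDerivAt_id x).const_sub 1).log (by simp; linarith)
  refine ((hlog₁.sub hlog₂).div_const 2).congr_of_eventuallyEq ?_ |>.congr_deriv ?_
  · filter_upwards [Ioo_mem_nhds h₁ h₂] with y hy using artanh_eq_half_log_sub hy
  · have : 1 + x ≠ 0 := by linarith
    have : 1 - x ≠ 0 := by linarith
    have : 1 - x ^ 2 ≠ 0 := by nlinarith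
    simp only [id]
    field_simp
    ring

theorem Real.exists_lt_artanh (C : ℝ) : ∃ x ∈ Ioo (0 : ℝ) 1, C < artanh x := by
  obtain ⟨x, hx, hxC⟩ := artanh_surjOn (mem_univ (max C 0 + 1))
  refine ⟨x, ⟨?_, hx.2⟩, by linarith [le_max_left C 0]⟩
  by_contra! h
  linarith [artanh_nonpos h, le_max_right C 0]

theorem Real.mul_log_le_mul_log {a b : ℝ} (ha : 0 ≤ a) (hab : a ≤ b) :
    a * log a ≤ a * log b := by
  rcases ha.eq_or_lt with rfl | ha
  · simp
  · gcongr

@[fun_prop]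
lemma continuous_bahI : Continuous bahI := by
  unfold bahI
  fun_prop

lemma bahI_nonneg {x : ℝ} (hx : x ∈ Icc (-1 : ℝ) 1) : 0 ≤ bahI x := by
  have h := Real.convexOn_mul_log.2 (mem_Ici.2 (by linarith [hx.1] : (0 : ℝ) ≤ 1 + x))
    (mem_Ici.2 (by linarith [hx.2] : (0 : ℝ) ≤ 1 - x)) (by norm_num : (0 : ℝ) ≤ 1 / 2)
    (by norm_num : (0 : ℝ) ≤ 1 / 2) (by norm_num)
  have hmid : 1 / 2 * (1 + x) + 1 / 2 * (1 - x) = 1 := by ring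
  simp only [smul_eq_mul] at h
  rw [hmid, log_one, mul_zero] at h
  unfold bahI
  linarith

lemma bahI_le_log_two {x : ℝ} (hx : x ∈ Icc (-1 : ℝ) 1) : bahI x ≤ log 2 := by
  have h₁ := mul_log_le_mul_log (by linarith [hx.1] : 0 ≤ 1 + x) (by linarith [hx.2] : 1 + x ≤ 2)
  have h₂ := mul_log_le_mul_log (by linarith [hx.2] : 0 ≤ 1 - x) (by linarith [hx.1] : 1 - x ≤ 2)
  unfold bahI
  linarith

lemma hasDerivAt_bahI {x : ℝ} (hx : x ∈ Ioo (-1) 1) : HasDerivAt bahI (artanh x) x := by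
  obtain ⟨h₁, h₂⟩ := hx
  have d₁ := (hasDerivAt_mul_log (by linarith : 1 + x ≠ 0)).comp x ((hasDerivAt_id x).const_add 1)
  have d₂ := (hasDerivAt_mul_log (by linarith : 1 - x ≠ 0)).comp x ((hasDerivAt_id x).const_sub 1)
  refine ((d₁.add d₂).div_const 2).congr_deriv ?_
  rw [artanh_eq_half_log_sub ⟨h₁, h₂⟩]
  ring

noncomputable def artanhDivPow (q : ℕ) (x : ℝ) : ℝ := artanh x / x ^ q

-- `x ^ (q + 1) * deriv (artanhDivPow q) x`
noncomputable def artanhDivPowNumer (q : ℕ) (x : ℝ) : ℝ := x / (1 - x ^ 2) - q * artanh x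

lemma hasDerivAt_artanhDivPowNumer (q : ℕ) {x : ℝ} (hx : x ∈ Ioo (-1) 1) :
    HasDerivAt (artanhDivPowNumer q) (((q + 1) * x ^ 2 - (q - 1)) / (1 - x ^ 2) ^ 2) x := by
  have hne : 1 - x ^ 2 ≠ 0 := by nlinarith [hx.1, hx.2]
  have hfrac : HasDerivAt (fun y : ℝ => y / (1 - y ^ 2)) ((1 + x ^ 2) / (1 - x ^ 2) ^ 2) x := by
    refine ((hasDerivAt_id x).div ((hasDerivAt_pow 2 x).const_sub 1) hne).congr_deriv ?_
    simp only [id]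
    field_simp
    ring
  refine (hfrac.sub ((hasDerivAt_artanh hx).const_mul (q : ℝ))).congr_deriv ?_
  field_simp
  ring

lemma artanhDivPowNumer_zero (q : ℕ) : artanhDivPowNumer q 0 = 0 := by
  simp [artanhDivPowNumer, artanh_zero]

-- `artanhDivPowNumer q` decreases up to `√((q - 1) / (q + 1))` and increases afterwards.
lemma artanhDivPowNumer_pos {q : ℕ} {u v : ℝ} (hu : 0 < u) (huv : u < v) (hv : v < 1)
    (hψu : 0 ≤ artanhDivPowNumer q u) : 0 < artanhDivPowNumer q v := by
  set ψ' : ℝ → ℝ := fun y => ((q + 1) * y ^ 2 - (q - 1)) / (1 - y ^ 2) ^ 2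
  have hderiv : ∀ {a b}, 0 ≤ a → b < 1 → ∀ y ∈ interior (Icc a b),
      HasDerivWithinAt (artanhDivPowNumer q) (ψ' y) (interior (Icc a b)) y := fun ha hb y hy => by
    rw [interior_Icc] at hy
    exact (hasDerivAt_artanhDivPowNumer q ⟨by linarith [hy.1], by linarith [hy.2]⟩).hasDerivWithinAt
  have hcont : ∀ {a b}, 0 ≤ a → b < 1 → ContinuousOn (artanhDivPowNumer q) (Icc a b) :=
    fun ha hb y hy => (hasDerivAt_artanhDivPowNumer q
      ⟨by linarith [hy.1], by linarith [hy.2]⟩).continuousAt.continuousWithinAt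
  have hu_crit : (q - 1 : ℝ) < (q + 1) * u ^ 2 := by
    by_contra! h
    have hanti : StrictAntiOn (artanhDivPowNumer q) (Icc 0 u) :=
      strictAntiOn_of_hasDerivWithinAt_neg (convex_Icc 0 u) (hcont le_rfl (by linarith))
        (hderiv le_rfl (by linarith)) fun y hy => by
          rw [interior_Icc] at hy
          have hyu : (q + 1) * y ^ 2 < (q + 1) * u ^ 2 := by gcongr <;> linarith [hy.1, hy.2]
          exact div_neg_of_neg_of_pos (by linarith) (pow_pos (by nlinarith [hy.1, hy.2]) 2)
    linarith [artanhDivPowNumer_zero q, hanti (left_mem_Icc.2 hu.le) (right_mem_Icc.2 hu.le) hu]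
  have hmono : StrictMonoOn (artanhDivPowNumer q) (Icc u v) :=
    strictMonoOn_of_hasDerivWithinAt_pos (convex_Icc u v) (hcont hu.le hv)
      (hderiv hu.le hv) fun y hy => by
        rw [interior_Icc] at hy
        have huy : (q + 1) * u ^ 2 < (q + 1) * y ^ 2 := by gcongr; exact hy.1
        exact div_pos (by linarith) (pow_pos (by nlinarith [hy.1, hy.2]) 2)
  linarith [hmono (left_mem_Icc.2 huv.le) (right_mem_Icc.2 huv.le) huv]

lemma hasDerivAt_artanhDivPow (q : ℕ) {x : ℝ} (hx : x ∈ Ioo 0 1) :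
    HasDerivAt (artanhDivPow q) (artanhDivPowNumer q x / x ^ (q + 1)) x := by
  have hx₀ : x ≠ 0 := hx.1.ne'
  have hne : 1 - x ^ 2 ≠ 0 := by nlinarith [hx.1, hx.2]
  refine ((hasDerivAt_artanh ⟨by linarith [hx.1], hx.2⟩).div (hasDerivAt_pow q x)
    (pow_ne_zero q hx₀)).congr_deriv ?_
  rcases q with _ | q
  · simp only [artanhDivPowNumer, CharP.cast_eq_zero, zero_mul, mul_zero, sub_zero, zero_add,
      pow_zero, pow_one]
    field_simp
  · simp only [artanhDivPowNumer, Nat.add_sub_cancel]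
    field_simp
    ring

lemma artanhDivPow_lt {q : ℕ} {a b x c : ℝ} (ha : 0 < a) (hx : x ∈ Ioo a b) (hb : b < 1)
    (hac : artanhDivPow q a ≤ c) (hbc : artanhDivPow q b ≤ c) : artanhDivPow q x < c := by
  have hderiv : ∀ y ∈ Ioo a b, HasDerivAt (artanhDivPow q)
      (artanhDivPowNumer q y / y ^ (q + 1)) y := fun y hy =>
    hasDerivAt_artanhDivPow q ⟨ha.trans hy.1, hy.2.trans hb⟩
  have hcont : ∀ {s t}, a ≤ s → t ≤ b → ContinuousOn (artanhDivPow q) (Icc s t) :=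
    fun hs ht y hy => (hasDerivAt_artanhDivPow q
      ⟨by linarith [hy.1], by linarith [hy.2]⟩).continuousAt.continuousWithinAt
  by_contra! hxc
  obtain ⟨y, hy, hslope⟩ := exists_hasDerivAt_eq_slope (artanhDivPow q) _ hx.1
    (hcont le_rfl hx.2.le) fun y hy => hderiv y ⟨hy.1, hy.2.trans hx.2⟩
  have hψy : 0 ≤ artanhDivPowNumer q y := by
    have hpos : 0 < y ^ (q + 1) := pow_pos (ha.trans hy.1) _
    have : 0 ≤ artanhDivPowNumer q y / y ^ (q + 1) :=
      hslope ▸ div_nonneg (by linarith) (by linarith [hx.1])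
    simpa using (le_div_iff₀ hpos).1 this
  have hmono : StrictMonoOn (artanhDivPow q) (Icc x b) :=
    strictMonoOn_of_hasDerivWithinAt_pos (convex_Icc x b) (hcont hx.1.le le_rfl)
      (fun z hz => by
        rw [interior_Icc] at hz ⊢
        exact (hderiv z ⟨hx.1.trans hz.1, hz.2⟩).hasDerivWithinAt)
      fun z hz => by
        rw [interior_Icc] at hz
        exact div_pos (artanhDivPowNumer_pos (ha.trans hy.1) (hy.2.trans hz.1) (hz.2.trans hb) hψy)
          (pow_pos (ha.trans (hx.1.trans hz.1)) _)
  linarith [hmono (left_mem_Icc.2 hx.2.le) (right_mem_Icc.2 hx.2.le) hx.2]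

lemma continuous_bahH (β : ℝ) (p : ℕ) : Continuous (bahH β p) := by
  unfold bahH
  fun_prop

lemma continuous_uncurry_bahH (p : ℕ) : Continuous (Function.uncurry fun β => bahH β p) := by
  unfold Function.uncurry bahH
  fun_prop

lemma hasDerivAt_bahH (β : ℝ) (p : ℕ) {x : ℝ} (hx : x ∈ Ioo (-1) 1) :
    HasDerivAt (bahH β p) (β * (p * x ^ (p - 1)) - artanh x) x :=
  ((hasDerivAt_pow p x).const_mul β).sub (hasDerivAt_bahI hx)

lemma bahH_zero (β : ℝ) {p : ℕ} (hp : p ≠ 0) : bahH β p 0 = 0 := by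
  simp [bahH, bahI, zero_pow hp]

lemma IsLocalMax.bahH_mul_pow_eq_artanh {β : ℝ} {p : ℕ} {m : ℝ} (hm : m ∈ Ioo (-1) 1)
    (hmax : IsLocalMax (bahH β p) m) : β * (p * m ^ (p - 1)) = artanh m :=
  sub_eq_zero.1 (hmax.hasDerivAt_eq_zero (hasDerivAt_bahH β p hm))

lemma ne_one_of_isMaxOn_bahH {β : ℝ} {p : ℕ} {m : ℝ} (hβ : 0 ≤ β)
    (hmax : IsMaxOn (bahH β p) (Icc 0 1) m) : m ≠ 1 := by
  rintro rfl
  obtain ⟨x₀, hx₀, hlarge⟩ := exists_lt_artanh (β * p)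
  have hanti : StrictAntiOn (bahH β p) (Icc x₀ 1) :=
    strictAntiOn_of_hasDerivWithinAt_neg (convex_Icc x₀ 1) (continuous_bahH β p).continuousOn
      (fun y hy => by
        rw [interior_Icc] at hy ⊢
        exact (hasDerivAt_bahH β p ⟨by linarith [hx₀.1, hy.1], hy.2⟩).hasDerivWithinAt)
      fun y hy => by
        rw [interior_Icc] at hy
        have hy₀ : 0 < y := hx₀.1.trans hy.1
        have hpow : (p : ℝ) * y ^ (p - 1) ≤ p :=
          mul_le_of_le_one_right p.cast_nonneg (pow_le_one₀ hy₀.le hy.2.le)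
        have := artanh_lt_artanh (by linarith [hx₀.1]) hy.2 hy.1
        nlinarith [mul_le_mul_of_nonneg_left hpow hβ]
  linarith [hanti (left_mem_Icc.2 hx₀.2.le) (right_mem_Icc.2 hx₀.2.le) hx₀.2,
    isMaxOn_iff.1 hmax x₀ ⟨hx₀.1.le, hx₀.2.le⟩]

lemma mem_Ioo_of_isMaxOn_bahH {β : ℝ} {p : ℕ} (hp : p ≠ 0) (hβ : 0 ≤ β) {m x : ℝ}
    (hm : m ∈ Icc 0 1) (hmax : IsMaxOn (bahH β p) (Icc 0 1) m) (hx : x ∈ Icc 0 1)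
    (hHx : 0 < bahH β p x) : m ∈ Ioo 0 1 := by
  refine ⟨hm.1.lt_of_ne ?_, hm.2.lt_of_ne (ne_one_of_isMaxOn_bahH hβ hmax)⟩
  rintro rfl
  linarith [bahH_zero β hp, isMaxOn_iff.1 hmax x hx]

lemma eq_of_isMaxOn_bahH {β : ℝ} {p : ℕ} {a b : ℝ} (ha : a ∈ Ioo 0 1) (hb : b ∈ Ioo 0 1)
    (hma : IsMaxOn (bahH β p) (Icc 0 1) a) (hmb : IsMaxOn (bahH β p) (Icc 0 1) b) : a = b := by
  by_contra hne
  wlog hab : a < b generalizing a b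
  · exact this hb ha hmb hma (Ne.symm hne) ((not_lt.1 hab).lt_of_ne (Ne.symm hne))
  have hcrit : ∀ m ∈ Ioo (0 : ℝ) 1, IsMaxOn (bahH β p) (Icc 0 1) m →
      artanhDivPow (p - 1) m = β * p := fun m hm hmax => by
    have := (hmax.isLocalMax (Icc_mem_nhds hm.1 hm.2)).bahH_mul_pow_eq_artanh
      ⟨by linarith [hm.1], hm.2⟩
    rw [artanhDivPow, ← this]
    field_simp [(pow_pos hm.1 (p - 1)).ne']
  have hmono : StrictMonoOn (bahH β p) (Icc a b) :=
    strictMonoOn_of_hasDerivWithinAt_pos (convex_Icc a b) (continuous_bahH β p).continuousOn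
      (fun y hy => by
        rw [interior_Icc] at hy ⊢
        exact (hasDerivAt_bahH β p ⟨by linarith [ha.1, hy.1], hy.2.trans hb.2⟩).hasDerivWithinAt)
      fun y hy => by
        rw [interior_Icc] at hy
        have hy₀ : 0 < y ^ (p - 1) := pow_pos (ha.1.trans hy.1) _
        have hφ := artanhDivPow_lt ha.1 hy hb.2 (hcrit a ha hma).le (hcrit b hb hmb).le
        rw [artanhDivPow, div_lt_iff₀ hy₀] at hφ
        linarith
  linarith [hmono (left_mem_Icc.2 hab.le) (right_mem_Icc.2 hab.le) hab,
    isMaxOn_iff.1 hma b ⟨hb.1.le, hb.2.le⟩]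

lemma lt_of_isMaxOn_bahH {p : ℕ} (hp : p ≠ 0) {β₁ β₂ m₁ m₂ : ℝ} (hβ : β₁ < β₂)
    (h₁ : m₁ ∈ Ioo 0 1) (h₂ : m₂ ∈ Ioo 0 1) (hm₁ : IsMaxOn (bahH β₁ p) (Icc 0 1) m₁)
    (hm₂ : IsMaxOn (bahH β₂ p) (Icc 0 1) m₂) : m₁ < m₂ := by
  have e₁ := isMaxOn_iff.1 hm₁ m₂ (Ioo_subset_Icc_self h₂)
  have e₂ := isMaxOn_iff.1 hm₂ m₁ (Ioo_subset_Icc_self h₁)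
  have hpow : m₁ ^ p ≤ m₂ ^ p := by
    unfold bahH at e₁ e₂
    nlinarith
  refine ((pow_le_pow_iff_left₀ h₁.1.le h₂.1.le hp).1 hpow).lt_of_ne fun heq => hβ.ne ?_
  subst heq
  have hm : m₁ ∈ Ioo (-1) 1 := ⟨by linarith [h₁.1], h₁.2⟩
  have c₁ := (hm₁.isLocalMax (Icc_mem_nhds h₁.1 h₁.2)).bahH_mul_pow_eq_artanh hm
  have c₂ := (hm₂.isLocalMax (Icc_mem_nhds h₁.1 h₁.2)).bahH_mul_pow_eq_artanh hm
  have hX : (p : ℝ) * m₁ ^ (p - 1) ≠ 0 :=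
    mul_ne_zero (Nat.cast_ne_zero.2 hp) (pow_pos h₁.1 _).ne'
  exact mul_right_cancel₀ hX (c₁.trans c₂.symm)

lemma tendsto_one_of_isMaxOn_bahH {p : ℕ} (hp : p ≠ 0) {ξ : ℝ → ℝ}
    (hξ : ∀ᶠ β in atTop, ξ β ∈ Icc 0 1 ∧ IsMaxOn (bahH β p) (Icc 0 1) (ξ β)) :
    Tendsto ξ atTop (𝓝 1) := by
  refine tendsto_order.2 ⟨fun c hc => ?_, fun c hc => hξ.mono fun β h => h.1.2.trans_lt hc⟩
  rcases lt_or_ge c 0 with hc₀ | hc₀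
  · exact hξ.mono fun β h => hc₀.trans_le h.1.1
  obtain ⟨x₀, hcx₀, hx₀⟩ := exists_between hc
  have hcx₀p : c ^ p < x₀ ^ p := pow_lt_pow_left₀ hcx₀ hc₀ hp
  filter_upwards [hξ, eventually_gt_atTop (log 2 / (x₀ ^ p - c ^ p)), eventually_gt_atTop 0]
    with β ⟨hmem, hmax⟩ hβ hβ₀
  have hcmp := isMaxOn_iff.1 hmax x₀ (show x₀ ∈ Icc 0 1 by constructor <;> linarith)
  have hlog : log 2 < β * (x₀ ^ p - c ^ p) := (div_lt_iff₀ (sub_pos.2 hcx₀p)).1 hβ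
  have hI₀ := bahI_nonneg (Icc_subset_Icc_left (by norm_num) hmem)
  have hI₁ := bahI_le_log_two (show x₀ ∈ Icc (-1) 1 by constructor <;> linarith)
  have hξp : c ^ p < ξ β ^ p := by
    unfold bahH at hcmp
    nlinarith
  exact lt_of_pow_lt_pow_left₀ p hmem.1 hξp

lemma sSup_image_bahH_eq {β : ℝ} {p : ℕ} {m : ℝ} (hm : m ∈ Icc (-1 : ℝ) 1)
    (hmax : IsMaxOn (bahH β p) (Icc (-1 : ℝ) 1) m) :
    sSup (bahH β p '' Icc (-1 : ℝ) 1) = bahH β p m :=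
  IsGreatest.csSup_eq ⟨mem_image_of_mem _ hm, forall_mem_image.2 (isMaxOn_iff.1 hmax)⟩

lemma betaStar_set_bddAbove (p : ℕ) :
    BddAbove {β : ℝ | 0 ≤ β ∧ sSup (bahH β p '' Icc (-1 : ℝ) 1) = 0} := by
  refine ⟨log 2, fun β ⟨_, hβ⟩ => ?_⟩
  have h₁ : bahH β p 1 ≤ 0 := hβ ▸ le_csSup
    (isCompact_Icc.image (continuous_bahH β p)).bddAbove (mem_image_of_mem _ (by norm_num))
  simp only [bahH, one_pow, mul_one, bahI] at h₁
  norm_num at h₁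
  linarith

lemma betaStar_nonneg {p : ℕ} (hp : p ≠ 0) : 0 ≤ betaStar p := by
  refine le_csSup (betaStar_set_bddAbove p) ⟨le_rfl, ?_⟩
  rw [sSup_image_bahH_eq (m := 0) (by norm_num), bahH_zero 0 hp]
  refine isMaxOn_iff.2 fun x hx => ?_
  rw [bahH_zero 0 hp]
  simpa [bahH] using bahI_nonneg hx

lemma bahH_pos_of_isMaxOn {p : ℕ} (hp : p ≠ 0) {β m : ℝ} (hβ : betaStar p < β)
    (hm : m ∈ Icc (-1 : ℝ) 1) (hmax : IsMaxOn (bahH β p) (Icc (-1 : ℝ) 1) m) :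
    0 < bahH β p m := by
  have h₀ : 0 ≤ bahH β p m := bahH_zero β hp ▸ isMaxOn_iff.1 hmax 0 (by norm_num)
  refine h₀.lt_of_ne fun h => hβ.not_ge (le_csSup (betaStar_set_bddAbove p) ?_)
  exact ⟨(betaStar_nonneg hp).trans hβ.le, (sSup_image_bahH_eq hm hmax).trans h.symm⟩

/-- For `p ≥ 2`, the map `ξ_p(β) = m_*(β,p)` (where, for each `β > β*(p)`, `ξ β` is the
positive global maximizer of `H_{β,p}` on `[−1,1]`) is continuous and strictly increasing
on `(β*(p), ∞)`, and `ξ_p(β) → 1` as `β → ∞`. -/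
theorem statement4 (p : ℕ) (hp : 2 ≤ p) (ξ : ℝ → ℝ)
    (hξ : ∀ β ∈ Set.Ioi (betaStar p),
      0 < ξ β ∧ ξ β ∈ Set.Icc (-1 : ℝ) 1 ∧ IsMaxOn (bahH β p) (Set.Icc (-1 : ℝ) 1) (ξ β)) :
    ContinuousOn ξ (Set.Ioi (betaStar p)) ∧
    StrictMonoOn ξ (Set.Ioi (betaStar p)) ∧
    Tendsto ξ atTop (nhds 1) := by
  have hp₀ : p ≠ 0 := by omega
  have hβ₀ : ∀ β ∈ Ioi (betaStar p), 0 ≤ β := fun β hβ => (betaStar_nonneg hp₀).trans hβ.le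
  have hξ' : ∀ β ∈ Ioi (betaStar p), ξ β ∈ Ioo 0 1 ∧ IsMaxOn (bahH β p) (Icc 0 1) (ξ β) := by
    intro β hβ
    obtain ⟨hpos, hmem, hmax⟩ := hξ β hβ
    have hmem' : ξ β ∈ Icc 0 1 := ⟨hpos.le, hmem.2⟩
    have hmax' := hmax.on_subset (Icc_subset_Icc_left (by norm_num : (-1 : ℝ) ≤ 0))
    exact ⟨mem_Ioo_of_isMaxOn_bahH hp₀ (hβ₀ β hβ) hmem' hmax' hmem'
      (bahH_pos_of_isMaxOn hp₀ hβ hmem hmax), hmax'⟩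
  have hunique : ∀ β ∈ Ioi (betaStar p), ∀ y ∈ Icc (0 : ℝ) 1,
      IsMaxOn (bahH β p) (Icc 0 1) y → y = ξ β := fun β hβ y hy hymax =>
    eq_of_isMaxOn_bahH (mem_Ioo_of_isMaxOn_bahH hp₀ (hβ₀ β hβ) hy hymax
      (Ioo_subset_Icc_self (hξ' β hβ).1) (bahH_pos_of_isMaxOn hp₀ hβ (hξ β hβ).2.1 (hξ β hβ).2.2))
      (hξ' β hβ).1 hymax (hξ' β hβ).2
  refine ⟨fun β hβ => ?_, fun β₁ h₁ β₂ h₂ h => ?_, tendsto_one_of_isMaxOn_bahH hp₀ ?_⟩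
  · refine (continuousAt_of_unique_isMaxOn (continuous_uncurry_bahH p) isCompact_Icc ?_
      (hunique β hβ)).continuousWithinAt
    filter_upwards [isOpen_Ioi.mem_nhds hβ] with β' hβ'
    exact ⟨Ioo_subset_Icc_self (hξ' β' hβ').1, (hξ' β' hβ').2⟩
  · exact lt_of_isMaxOn_bahH hp₀ h (hξ' β₁ h₁).1 (hξ' β₂ h₂).1 (hξ' β₁ h₁).2 (hξ' β₂ h₂).2
  · filter_upwards [eventually_gt_atTop (betaStar p)] with β hβ
    exact ⟨Ioo_subset_Icc_self (hξ' β hβ).1, (hξ' β hβ).2⟩
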